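/- arXiv:1206.4535 — 3 statements merged into one kernel-verified Lean document; each statement's English description precedes it below -/
import Mathlib

section
/- Let R be a commutative ring and B a commutative R-algebra that is free of rank d as an R-module with R-module basis b = (b₁, …, b_d). Then B is an étale R-algebra (formally étale and of finite presentation over R) if and only if the discriminant disc_R(b) is a unit of R. -/
/-!
Both conditions are equivalent to the existence of a trace-dual family `c` with
`Tr(bᵢ cⱼ) = δᵢⱼ`; over `R` such a family exists exactly when the trace matrix is invertible.
Given `c`, the element `∑ bᵢ ⊗ cᵢ` is a separability idempotent, so `B` is unramified; being
finite free it is also flat and of finite presentation, hence étale. Conversely, if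
`∑ xₚ ⊗ yₚ` is a separability idempotent, then `x = ∑ Tr(x xₚ) yₚ` for every `x`, and taking
`b`-coordinates of this identity yields the dual family `cⱼ = ∑ (yₚ)ⱼ xₚ`.
-/

open TensorProduct Module

namespace Algebra

variable {ι R B : Type*} [CommRing R] [CommRing B] [Algebra R B]

lemma exists_sum_tmul_of_formallyUnramified [FormallyUnramified R B] [EssFiniteType R B] :
    ∃ S : Finset (B × B), ∑ p ∈ S, p.1 * p.2 = 1 ∧
      ∀ s, ∑ p ∈ S, (s * p.1) ⊗ₜ[R] p.2 = ∑ p ∈ S, p.1 ⊗ₜ[R] (s * p.2) := by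
  obtain ⟨t, ht, ht1⟩ := FormallyUnramified.iff_exists_tensorProduct.mp ‹_›
  obtain ⟨S, rfl⟩ := TensorProduct.exists_finset t
  refine ⟨S, by simpa using ht1, fun s => ?_⟩
  have := ht s
  rw [sub_mul, sub_eq_zero, Finset.mul_sum, Finset.mul_sum] at this
  simpa [Algebra.TensorProduct.tmul_mul_tmul] using this.symm

lemma sum_smul_mul_eq_mul_sum_smul {S : Finset (B × B)}
    (hS : ∀ s, ∑ p ∈ S, (s * p.1) ⊗ₜ[R] p.2 = ∑ p ∈ S, p.1 ⊗ₜ[R] (s * p.2))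
    (φ : B →ₗ[R] R) (s : B) : ∑ p ∈ S, φ (s * p.1) • p.2 = s * ∑ p ∈ S, φ p.1 • p.2 := by
  simpa [Finset.mul_sum, mul_smul_comm] using
    congrArg (_root_.TensorProduct.lift ((LinearMap.lsmul R B).comp φ)) (hS s)

lemma trace_eq_sum_repr_mul [Fintype ι] [DecidableEq ι] (b : Basis ι R B) (x : B) :
    trace R B x = ∑ i, b.repr (x * b i) i := by
  simp [trace_eq_matrix_trace b, Matrix.trace, leftMulMatrix_eq_repr_mul]

lemma sum_trace_mul_smul_of_sum_tmul [Module.Free R B] [Module.Finite R B] {S : Finset (B × B)}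
    (hS1 : ∑ p ∈ S, p.1 * p.2 = 1)
    (hS : ∀ s, ∑ p ∈ S, (s * p.1) ⊗ₜ[R] p.2 = ∑ p ∈ S, p.1 ⊗ₜ[R] (s * p.2)) (x : B) :
    ∑ p ∈ S, trace R B (x * p.1) • p.2 = x := by
  classical
  have b := Module.Free.chooseBasis R B
  -- `Tr p₁ = ∑ᵢ bᵢ*(bᵢ p₁)`, and the separability identity moves each `bᵢ` to the other factor.
  have htrace : ∑ p ∈ S, trace R B p.1 • p.2 = 1 := calc
    _ = ∑ i, ∑ p ∈ S, b.coord i (b i * p.1) • p.2 := by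
      simp only [trace_eq_sum_repr_mul b, Finset.sum_smul, mul_comm _ (b _)]
      exact Finset.sum_comm
    _ = ∑ p ∈ S, (∑ i, b.repr p.1 i • b i) * p.2 := by
      simp only [sum_smul_mul_eq_mul_sum_smul hS]
      simp only [Finset.mul_sum, Finset.sum_mul, smul_mul_assoc, mul_smul_comm, Basis.coord_apply]
      exact Finset.sum_comm
    _ = 1 := by simpa only [b.sum_repr] using hS1
  rw [sum_smul_mul_eq_mul_sum_smul hS (trace R B), htrace, mul_one]

lemma trace_mul_eq_traceMatrix_mul_toMatrix [Fintype ι] (b : Basis ι R B) (c : ι → B)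
    (i j : ι) :
    trace R B (b i * c j) = (traceMatrix R b * b.toMatrix c) i j := by
  conv_lhs => rw [← b.sum_repr (c j)]
  simp only [Finset.mul_sum, map_sum, mul_smul_comm, map_smul, smul_eq_mul, Matrix.mul_apply,
    traceMatrix_apply, traceForm_apply, Basis.toMatrix_apply, mul_comm]

section TraceDual

variable [DecidableEq ι]

variable (R) in
def IsTraceDual (b c : ι → B) : Prop :=
  ∀ i j, trace R B (b i * c j) = if i = j then 1 else 0

lemma IsTraceDual.repr_apply {b : Basis ι R B} {c : ι → B} (h : IsTraceDual R b c) (x : B)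
    (i : ι) : b.repr x i = trace R B (x * c i) := by
  have : b.coord i = (trace R B).comp (LinearMap.mulRight R (c i)) :=
    b.ext fun j => by simp [h j i, Finsupp.single_apply]
  exact LinearMap.congr_fun this x

lemma isTraceDual_of_sum_trace_mul_smul (b : Basis ι R B) {S : Finset (B × B)}
    (hS : ∀ x, ∑ p ∈ S, trace R B (x * p.1) • p.2 = x) :
    IsTraceDual R b fun j => ∑ p ∈ S, b.repr p.2 j • p.1 := by
  intro i j
  calc trace R B (b i * ∑ p ∈ S, b.repr p.2 j • p.1)
      = b.repr (∑ p ∈ S, trace R B (b i * p.1) • p.2) j := by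
        simp [Finset.mul_sum, mul_comm]
    _ = if i = j then 1 else 0 := by simp [hS, Finsupp.single_apply]

variable [Fintype ι] (b : Basis ι R B)

lemma isTraceDual_iff_traceMatrix_mul_toMatrix {c : ι → B} :
    IsTraceDual R b c ↔ traceMatrix R b * b.toMatrix c = 1 := by
  simp only [IsTraceDual, trace_mul_eq_traceMatrix_mul_toMatrix, ← Matrix.one_apply,
    Matrix.ext_iff]

theorem isUnit_discr_iff_exists_isTraceDual : IsUnit (discr R b) ↔ ∃ c, IsTraceDual R b c := by
  simp_rw [isTraceDual_iff_traceMatrix_mul_toMatrix]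
  refine ⟨fun hb => ?_, fun ⟨c, hc⟩ => Matrix.isUnit_det_of_right_inverse hc⟩
  refine ⟨fun j => b.equivFun.symm fun k => (traceMatrix R b)⁻¹ k j, ?_⟩
  have : b.toMatrix (fun j => b.equivFun.symm fun k => (traceMatrix R b)⁻¹ k j) =
      (traceMatrix R b)⁻¹ := by
    ext i j
    simp [Basis.toMatrix_apply, Finsupp.single_apply]
  rw [this, Matrix.mul_nonsing_inv _ hb]

lemma eq_of_forall_trace_mul_eq (hb : IsUnit (discr R b)) {x y : B}
    (h : ∀ j, trace R B (x * b j) = trace R B (y * b j)) : x = y := by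
  have hvec (z : B) :
      Matrix.vecMul (b.repr z) (traceMatrix R b) = fun j => trace R B (z * b j) := by
    ext j
    conv_rhs => rw [← b.sum_repr z]
    simp only [Finset.sum_mul, map_sum, smul_mul_assoc, map_smul, smul_eq_mul, Matrix.vecMul,
      dotProduct, traceMatrix_apply, traceForm_apply]
  have hinj := Matrix.vecMul_injective_of_isUnit ((Matrix.isUnit_iff_isUnit_det _).mpr hb)
  exact b.repr.injective <| Finsupp.ext <| congrFun <| hinj <| by simp only [hvec]; exact funext h

lemma exists_isTraceDual_of_formallyUnramified [FormallyUnramified R B] :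
    ∃ c, IsTraceDual R b c := by
  have : Module.Finite R B := .of_basis b
  have : Module.Free R B := .of_basis b
  obtain ⟨S, hS1, hS⟩ := exists_sum_tmul_of_formallyUnramified (R := R) (B := B)
  exact ⟨_, isTraceDual_of_sum_trace_mul_smul b (sum_trace_mul_smul_of_sum_tmul hS1 hS)⟩

namespace IsTraceDual

variable {b} {c : ι → B}

lemma isUnit_discr (h : IsTraceDual R b c) : IsUnit (discr R b) :=
  (isUnit_discr_iff_exists_isTraceDual b).mpr ⟨c, h⟩

lemma sum_trace_mul_smul (h : IsTraceDual R b c) (x : B) : ∑ i, trace R B (x * b i) • c i = x := by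
  refine eq_of_forall_trace_mul_eq b h.isUnit_discr fun j => ?_
  simp only [Finset.sum_mul, map_sum, smul_mul_assoc, map_smul, smul_eq_mul]
  simp [mul_comm _ (b j), h j]

lemma sum_mul_eq_one (h : IsTraceDual R b c) : ∑ i, b i * c i = 1 := by
  refine eq_of_forall_trace_mul_eq b h.isUnit_discr fun j => ?_
  rw [one_mul, trace_eq_sum_repr_mul b (b j), Finset.sum_mul, map_sum]
  simp only [h.repr_apply]
  exact Finset.sum_congr rfl fun i _ => by congr 1; ring

lemma sum_mul_tmul_eq_sum_tmul_mul (h : IsTraceDual R b c) (s : B) :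
    ∑ i, (s * b i) ⊗ₜ[R] c i = ∑ i, b i ⊗ₜ[R] (s * c i) := by
  calc ∑ i, (s * b i) ⊗ₜ[R] c i
      = ∑ i, ∑ j, trace R B (s * b i * c j) • (b j ⊗ₜ[R] c i) := by
        simp only [TensorProduct.smul_tmul', ← TensorProduct.sum_tmul, ← h.repr_apply, b.sum_repr]
    _ = ∑ j, b j ⊗ₜ[R] ∑ i, trace R B (s * c j * b i) • c i := by
        rw [Finset.sum_comm]
        simp only [TensorProduct.tmul_sum, TensorProduct.tmul_smul]
        exact Finset.sum_congr rfl fun j _ => Finset.sum_congr rfl fun i _ => by congr 2; ring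
    _ = ∑ i, b i ⊗ₜ[R] (s * c i) := by simp only [h.sum_trace_mul_smul]

lemma formallyUnramified (h : IsTraceDual R b c) : FormallyUnramified R B := by
  have : Module.Finite R B := .of_basis b
  refine FormallyUnramified.iff_exists_tensorProduct.mpr ⟨∑ i, b i ⊗ₜ[R] c i, fun s => ?_, ?_⟩
  · simp only [sub_mul, Finset.mul_sum, Algebra.TensorProduct.tmul_mul_tmul, one_mul]
    rw [Finset.sum_sub_distrib, h.sum_mul_tmul_eq_sum_tmul_mul, sub_self]
  · simpa using h.sum_mul_eq_one

end IsTraceDual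

end TraceDual

end Algebra

/-- Let `R` be a commutative ring and `B` a commutative `R`-algebra that is
free of rank `d` as an `R`-module with `R`-module basis `b`. Then `B` is an étale `R`-algebra
(formally étale and of finite presentation over `R`) if and only if the discriminant
`disc_R(b) = det (Tr_{B/R} (bᵢ bⱼ))` is a unit of `R`. -/
theorem etale_iff_isUnit_discr (d : ℕ) (R B : Type) [CommRing R] [CommRing B]
    [Algebra R B] (b : Module.Basis (Fin d) R B) :
    Algebra.Etale R B ↔ IsUnit (Algebra.discr R (⇑b)) := by
  have : Module.Finite R B := .of_basis b
  have : Module.Free R B := .of_basis b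
  rw [Algebra.isUnit_discr_iff_exists_isTraceDual]
  refine ⟨fun _ => Algebra.exists_isTraceDual_of_formallyUnramified b, fun ⟨c, hc⟩ => ?_⟩
  have := hc.formallyUnramified
  have := Module.finitePresentation_of_projective R B
  exact Algebra.Etale.of_formallyUnramified_of_flat
end

section
/- Let (R, m) be a regular local ring of Krull dimension 2 and let M be a nonzero finitely generated R-module admitting a regular sequence of length two: there exist x, y ∈ m such that x is a nonzerodivisor on M and y is a nonzerodivisor on M/xM, with M/(x,y)M ≠ 0. Then M is a free R-module. -/
lemma koszul_h1_vanish {R M : Type*} [CommRing R] [AddCommGroup M] [Module R M]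
    (a b x y : R) (hx : x ∈ Ideal.span ({a, b} : Set R)) (hy : y ∈ Ideal.span ({a, b} : Set R))
    (hxreg : IsSMulRegular M x)
    (hyreg : IsSMulRegular (M ⧸ (Ideal.span {x} • (⊤ : Submodule R M))) y)
    (s t : M) (h : a • s + b • t = 0) : ∃ w : M, s = b • w ∧ t = -(a • w) := by
  obtain ⟨α, β, hxab⟩ := Ideal.mem_span_pair.mp hx
  obtain ⟨γ, δ, hyab⟩ := Ideal.mem_span_pair.mp hy
  have has : a • s = -(b • t) := by rw [eq_neg_iff_add_eq_zero]; exact h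
  set u : M := β • s - α • t with hu
  set v : M := δ • s - γ • t with hv
  have hxs : x • s = b • u := by
    linear_combination (norm := module) α • has + (congrArg (· • s) hxab).symm
  have hxt : x • t = -(a • u) := by
    linear_combination (norm := module) β • has + (congrArg (· • t) hxab).symm
  have hxv : x • v = y • u := by
    linear_combination (norm := module) δ • hxs - γ • hxt - (congrArg (· • u) hyab).symm
  -- reduce mod `x` and use regularity of `y` on `M/xM`
  have hmk : (Submodule.Quotient.mk u : M ⧸ (Ideal.span {x} • (⊤ : Submodule R M))) = 0 := by
    apply hyreg
    show y • (Submodule.Quotient.mk u : M ⧸ (Ideal.span {x} • (⊤ : Submodule R M))) = y • 0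
    rw [smul_zero, ← Submodule.Quotient.mk_smul, ← hxv, Submodule.Quotient.mk_eq_zero]
    exact Submodule.smul_mem_smul (Ideal.mem_span_singleton_self x) trivial
  rw [Submodule.Quotient.mk_eq_zero] at hmk
  have hle : Ideal.span {x} • (⊤ : Submodule R M) ≤ LinearMap.range (LinearMap.lsmul R M x) :=
    Submodule.smul_le.mpr (fun r hr m _ => by
      obtain ⟨c, rfl⟩ := Ideal.mem_span_singleton'.mp hr
      exact ⟨c • m, by rw [LinearMap.lsmul_apply, smul_comm, ← mul_smul, mul_comm]⟩)
  obtain ⟨w, hw⟩ := hle hmk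
  rw [LinearMap.lsmul_apply] at hw
  refine ⟨w, hxreg ?_, hxreg ?_⟩
  · show x • s = x • (b • w)
    rw [hxs, ← hw, smul_comm x b w]
  · show x • t = x • (-(a • w))
    rw [hxt, ← hw]
    module
open TensorProduct in
/-- Let `(R, m)` be a regular local ring of Krull dimension 2 (a Noetherian
local ring of Krull dimension 2 whose maximal ideal is generated by two elements) and let `M`
be a nonzero finitely generated `R`-module admitting a regular sequence of length two: there
exist `x, y ∈ m` such that `x` is a nonzerodivisor on `M` and `y` is a nonzerodivisor on
`M/xM`, with `M/(x,y)M ≠ 0`. Then `M` is a free `R`-module. -/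
theorem free_of_finite_depth_two_over_regular_local_dim_two
    (R : Type*) [CommRing R] [IsLocalRing R] [IsNoetherianRing R]
    (hreg : ∃ a b : R, IsLocalRing.maximalIdeal R = Ideal.span {a, b})
    (hdim : ringKrullDim R = 2)
    (M : Type*) [AddCommGroup M] [Module R M] [Module.Finite R M] [Nontrivial M]
    (x y : R) (hx : x ∈ IsLocalRing.maximalIdeal R) (hy : y ∈ IsLocalRing.maximalIdeal R)
    (hxreg : IsSMulRegular M x)
    (hyreg : IsSMulRegular (M ⧸ (Ideal.span {x} • (⊤ : Submodule R M))) y)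
    (hquot : Nontrivial (M ⧸ (Ideal.span {x, y} • (⊤ : Submodule R M)))) :
    Module.Free R M := by
  obtain ⟨a, b, hab⟩ := hreg
  have := Module.finitePresentation_of_finite R M
  apply Module.free_of_maximalIdeal_rTensor_injective (R := R) (M := M)
  rw [← LinearMap.ker_eq_bot, LinearMap.ker_eq_bot']
  intro z hz
  have ha : a ∈ IsLocalRing.maximalIdeal R := hab ▸ Ideal.subset_span (by simp)
  have hb : b ∈ IsLocalRing.maximalIdeal R := hab ▸ Ideal.subset_span (by simp)
  have hrep : ∀ z : (IsLocalRing.maximalIdeal R) ⊗[R] M, ∃ s t : M,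
      z = (⟨a, ha⟩ : IsLocalRing.maximalIdeal R) ⊗ₜ[R] s + (⟨b, hb⟩ : IsLocalRing.maximalIdeal R) ⊗ₜ[R] t := by
    intro z
    induction z using TensorProduct.induction_on with
    | zero => exact ⟨0, 0, by simp⟩
    | tmul i m =>
      obtain ⟨r, q, hrq⟩ := Ideal.mem_span_pair.mp (by rw [← hab]; exact i.2)
      refine ⟨r • m, q • m, ?_⟩
      have hi : i = r • (⟨a, ha⟩ : IsLocalRing.maximalIdeal R) + q • ⟨b, hb⟩ :=
        Subtype.ext (by simpa [mul_comm] using hrq.symm)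
      rw [hi, add_tmul, smul_tmul, smul_tmul]
    | add z₁ z₂ h₁ h₂ =>
      obtain ⟨s₁, t₁, rfl⟩ := h₁; obtain ⟨s₂, t₂, rfl⟩ := h₂
      exact ⟨s₁ + s₂, t₁ + t₂, by rw [tmul_add, tmul_add]; abel⟩
  obtain ⟨s, t, rfl⟩ := hrep z
  have h0 : a • s + b • t = 0 := by
    have := congrArg (TensorProduct.lid R M) hz
    simpa using this
  obtain ⟨w, rfl, rfl⟩ := koszul_h1_vanish a b x y (hab ▸ hx) (hab ▸ hy) hxreg hyreg s t h0
  have hba : (b • (⟨a, ha⟩ : IsLocalRing.maximalIdeal R)) = a • ⟨b, hb⟩ :=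
    Subtype.ext (by simp [mul_comm])
  rw [tmul_neg, ← smul_tmul, ← smul_tmul, hba, add_neg_cancel]
end

section
/- Let k be a field, R = k⟦t⟧ the formal power series ring, B a commutative R-algebra that is free of rank d as an R-module, and A ⊆ B an R-subalgebra that is also free of rank d as an R-module. Let α be an R-basis of A and β an R-basis of B, and assume disc_R(β) ≠ 0. Then the quotient B/A is an R-module of finite length, disc_R(α) ≠ 0, and ord_t(disc_R(α)) = ord_t(disc_R(β)) + 2·length_R(B/A), where ord_t denotes the t-adic valuation on R. -/
/-!
Over the discrete valuation ring `R = k⟦t⟧`, which is a PID, a Smith normal form gives a basis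
`(e_i)` of `B` and nonzero `a_i ∈ R` such that `(a_i e_i)` is a basis of `A`. Hence
`B ⧸ A ≅ ⨁ R ⧸ (a_i)` has length `∑ ord(a_i) = ord(∏ a_i) = ord(det W)`, where `W` is the matrix
of `α` in the basis `β`: `det W` and `∏ a_i` differ by a unit.

As `det W ≠ 0`, multiplication by `x ∈ A` on `A` and on `B` are intertwined by `W`, so they have
the same trace. Therefore `disc(α) = det(W)² · disc(β)`, and taking `t`-adic orders gives the
formula.
-/

open Module Submodule
open scoped nonZeroDivisors

theorem Matrix.trace_eq_of_mul_eq_mul {n R : Type*} [Fintype n] [DecidableEq n] [CommRing R]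
    [IsDomain R] {A B P : Matrix n n R} (hP : P.det ≠ 0) (h : A * P = P * B) :
    A.trace = B.trace := by
  refine mul_left_cancel₀ hP ?_
  calc P.det * A.trace = (P.adjugate * A * P).trace := by
        rw [trace_mul_cycle, mul_adjugate, smul_mul, Matrix.one_mul, trace_smul, smul_eq_mul]
    _ = (P.adjugate * P * B).trace := by rw [Matrix.mul_assoc, h, Matrix.mul_assoc]
    _ = P.det * B.trace := by
        rw [adjugate_mul, smul_mul, Matrix.one_mul, trace_smul, smul_eq_mul]

theorem LinearMap.trace_eq_of_comp_eq_comp {R M N ι : Type*} [CommRing R] [IsDomain R]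
    [AddCommGroup M] [Module R M] [AddCommGroup N] [Module R N] [Fintype ι] [DecidableEq ι]
    (b : Basis ι R M) (c : Basis ι R N) {f : M →ₗ[R] M} {g : N →ₗ[R] N} {i : N →ₗ[R] M}
    (hi : b.det (i ∘ c) ≠ 0) (h : f ∘ₗ i = i ∘ₗ g) : trace R M f = trace R N g := by
  rw [Basis.det_apply, ← LinearMap.toMatrix_eq_basisToMatrix] at hi
  rw [trace_eq_matrix_trace R b, trace_eq_matrix_trace R c]
  refine Matrix.trace_eq_of_mul_eq_mul hi ?_
  rw [← LinearMap.toMatrix_comp, ← LinearMap.toMatrix_comp, h]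

section Subalgebra

variable {R B ι : Type*} [CommRing R] [IsDomain R] [CommRing B] [Algebra R B] [Fintype ι]
  [DecidableEq ι] (S : Subalgebra R B) (b : Basis ι R B) (c : Basis ι R S)

theorem Subalgebra.trace_eq_trace (hc : b.det (S.val ∘ c) ≠ 0) (x : S) :
    Algebra.trace R S x = Algebra.trace R B x :=
  (LinearMap.trace_eq_of_comp_eq_comp b c (i := S.val.toLinearMap) hc
    (LinearMap.ext fun _ => rfl)).symm

theorem Subalgebra.discr_eq_discr (hc : b.det (S.val ∘ c) ≠ 0) :
    Algebra.discr R c = Algebra.discr R (S.val ∘ c) := by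
  simp only [Algebra.discr_def]
  congr 1
  ext i j
  simp [Algebra.traceMatrix_apply, Algebra.traceForm_apply, S.trace_eq_trace b c hc]

end Subalgebra

theorem Algebra.discr_eq_det_sq_mul_discr {A B ι : Type*} [CommRing A] [CommRing B]
    [Algebra A B] [Fintype ι] [DecidableEq ι] (b : Basis ι A B) (v : ι → B) :
    Algebra.discr A v = b.det v ^ 2 * Algebra.discr A b := by
  conv_lhs => rw [← b.toMatrix_map_vecMul v]
  rw [Algebra.discr_of_matrix_vecMul, Basis.det_apply]

theorem Ring.ord_prod {R ι : Type*} [CommRing R] {s : Finset ι} {f : ι → R}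
    (hf : ∀ i ∈ s, f i ∈ R⁰) : Ring.ord R (∏ i ∈ s, f i) = ∑ i ∈ s, Ring.ord R (f i) := by
  classical
  induction s using Finset.induction with
  | empty => simp
  | insert a s ha ih =>
    rw [Finset.prod_insert ha, Finset.sum_insert ha,
      Ring.ord_mul' R (hf a (Finset.mem_insert_self a s)),
      ih fun i hi => hf i (Finset.mem_insert_of_mem hi)]

theorem PowerSeries.ord_eq_order {k : Type*} [Field k] (f : PowerSeries k) :
    Ring.ord (PowerSeries k) f = f.order := by
  rw [Ring.ord_eq_addVal]
  rcases eq_or_ne f 0 with rfl | hf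
  · simp
  obtain ⟨n, u, rfl⟩ := IsDiscreteValuationRing.eq_unit_mul_pow_irreducible hf X_irreducible
  rw [IsDiscreteValuationRing.addVal_def' u X_irreducible, order_mul,
    order_zero_of_unit u.isUnit, order_X_pow, zero_add]

section PID

variable {R M ι : Type*} [CommRing R] [IsDomain R] [IsPrincipalIdealRing R] [AddCommGroup M]
  [Module R M] [Fintype ι] [DecidableEq ι] (b : Basis ι R M) {N : Submodule R M}
  (bN : Basis ι R N)

theorem Submodule.associated_det_basis_change_prod_smithNormalFormCoeffs
    (h : finrank R N = finrank R M) :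
    Associated (b.det (N.subtype ∘ bN)) (∏ i, smithNormalFormCoeffs b h i) := by
  have hdiag : (smithNormalFormTopBasis b h).det (N.subtype ∘ smithNormalFormBotBasis b h) =
      ∏ i, smithNormalFormCoeffs b h i := by
    rw [Basis.det_apply, ← Matrix.det_diagonal]
    congr 1
    ext i j
    rcases eq_or_ne i j with rfl | hij
    · simp [Basis.toMatrix_apply]
    · simp [Basis.toMatrix_apply, hij]
  rw [← hdiag, Basis.det_comp_basis, Basis.det_comp_basis]
  exact LinearMap.associated_det_comp_equiv _ _ _

theorem Submodule.det_basis_change_ne_zero : b.det (N.subtype ∘ bN) ≠ 0 := by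
  have h : finrank R N = finrank R M :=
    (finrank_eq_card_basis bN).trans (finrank_eq_card_basis b).symm
  rw [(associated_det_basis_change_prod_smithNormalFormCoeffs b bN h).ne_zero_iff,
    Finset.prod_ne_zero_iff]
  exact fun i _ => smithNormalFormCoeffs_ne_zero b h i

theorem Submodule.length_quotient_eq_ord_det_basis_change :
    Module.length R (M ⧸ N) = Ring.ord R (b.det (N.subtype ∘ bN)) := by
  have h : finrank R N = finrank R M :=
    (finrank_eq_card_basis bN).trans (finrank_eq_card_basis b).symm
  rw [(N.quotientEquivPiSpan b h).length_eq, Module.length_pi_of_fintype,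
    Ring.ord_eq_of_associated (associated_det_basis_change_prod_smithNormalFormCoeffs b bN h),
    Ring.ord_prod fun i _ => mem_nonZeroDivisors_of_ne_zero (smithNormalFormCoeffs_ne_zero b h i)]
  simp only [Ring.ord]

end PID

/-- Let `k` be a field, `R = k⟦t⟧` the formal power series ring, `B` a
commutative `R`-algebra that is free of rank `d` as an `R`-module, and `A ⊆ B` an
`R`-subalgebra that is also free of rank `d` as an `R`-module. Let `α` be an `R`-basis of
`A` and `β` an `R`-basis of `B`, and assume `disc_R(β) ≠ 0`. Then the quotient `B/A` is an
`R`-module of finite length, `disc_R(α) ≠ 0`, and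
`ord_t(disc_R(α)) = ord_t(disc_R(β)) + 2 · length_R(B/A)`, the length being expressed here
as the length of any composition series of `B/A`. -/
theorem order_discr_eq_order_discr_add_two_mul_length
    (k : Type*) [Field k] (d : ℕ) (B : Type*) [CommRing B]
    [Algebra (PowerSeries k) B]
    (A : Subalgebra (PowerSeries k) B)
    (β : Module.Basis (Fin d) (PowerSeries k) B)
    (α : Module.Basis (Fin d) (PowerSeries k) A)
    (hβ : Algebra.discr (PowerSeries k) (⇑β) ≠ 0) :
    IsFiniteLength (PowerSeries k) (B ⧸ Subalgebra.toSubmodule A) ∧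
    Algebra.discr (PowerSeries k) (⇑α) ≠ 0 ∧
    ∀ s : CompositionSeries (Submodule (PowerSeries k) (B ⧸ Subalgebra.toSubmodule A)),
      s.head = ⊥ → s.last = ⊤ →
      (Algebra.discr (PowerSeries k) (⇑α)).order
        = (Algebra.discr (PowerSeries k) (⇑β)).order + 2 * (s.length : ℕ∞) := by
  let bA : Basis (Fin d) (PowerSeries k) (Subalgebra.toSubmodule A) :=
    α.map A.toSubmoduleEquiv.symm
  let v : Fin d → B := A.val ∘ α
  have hbA : (Subalgebra.toSubmodule A).subtype ∘ bA = v := rfl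
  have hdet : β.det v ≠ 0 := hbA ▸ det_basis_change_ne_zero β bA
  have hlength : Module.length (PowerSeries k) (B ⧸ Subalgebra.toSubmodule A) =
      (β.det v).order := by
    rw [← PowerSeries.ord_eq_order, ← hbA, length_quotient_eq_ord_det_basis_change β bA]
  have hdiscr : Algebra.discr (PowerSeries k) α =
      β.det v ^ 2 * Algebra.discr (PowerSeries k) β := by
    rw [A.discr_eq_discr β α hdet, Algebra.discr_eq_det_sq_mul_discr β]
  refine ⟨Module.length_ne_top_iff.mp ?_, hdiscr ▸ mul_ne_zero (pow_ne_zero 2 hdet) hβ,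
    fun s hhead hlast => ?_⟩
  · rwa [hlength, Ne, PowerSeries.order_eq_top]
  · rw [Module.length_compositionSeries s hhead hlast, hlength, hdiscr, PowerSeries.order_mul,
      PowerSeries.order_pow]
    ring
end
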